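/- Let f_1, f_2, …, f_p : ℝ → ℝ and let a ∈ OH_k be a top-less abstract value. Then the composition f_1^OH ∘ f_2^OH ∘ ⋯ ∘ f_p^OH is a complete abstraction of f_1 ∘ f_2 ∘ ⋯ ∘ f_p on a, i.e., (f_1 ∘ ⋯ ∘ f_p)(γ^{OH_k}(a)) = γ^{OH_k}((f_1^OH ∘ ⋯ ∘ f_p^OH)(a)). -/
import Mathlib


/-- The flat constant-propagation domain CP = ℝ ∪ {⊥, ⊤}. -/
inductive CP where
  | bot : CP
  | top : CP
  | val : ℝ → CP

/-- The flat partial order on CP: ⊥ ⊑ z ⊑ ⊤ for every z ∈ ℝ,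
    distinct reals incomparable. -/
def CP.le : CP → CP → Prop
  | .bot, _ => True
  | _, .top => True
  | .val x, .val y => x = y
  | _, _ => False

/-- Concretization of CP. -/
def gammaCP : CP → Set ℝ
  | .bot => ∅
  | .top => Set.univ
  | .val z => {z}

open Classical in
/-- Best abstraction of a set of reals in CP. -/
noncomputable def alphaCP (X : Set ℝ) : CP :=
  if X = ∅ then .bot
  else if h : ∃ z : ℝ, X = {z} then .val h.choose
  else .top

/-- Abstract counterpart on CP of a function f : ℝ → ℝ. -/
def fCP (f : ℝ → ℝ) : CP → CP
  | .bot => .bot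
  | .top => .top
  | .val z => .val (f z)

/-- The one-hot abstract domain OH_k = (CP × CP)^k. -/
def OH (k : ℕ) : Type := Fin k → CP × CP

/-- γ̂_i(a): concrete vectors whose i-th component was originally true. -/
def gammaHat {k : ℕ} (i : Fin k) (a : OH k) : Set (Fin k → ℝ) :=
  {x | x i ∈ gammaCP (a i).2 ∧ ∀ j : Fin k, j ≠ i → x j ∈ gammaCP (a j).1}

/-- Concretization of the one-hot abstract domain. -/
def gammaOH {k : ℕ} (a : OH k) : Set (Fin k → ℝ) :=
  ⋃ i : Fin k, gammaHat i a

/-- The one-hot tier with 1 in position i and 0 elsewhere. -/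
def oneHot {k : ℕ} (i : Fin k) : Fin k → ℝ := fun j => if j = i then 1 else 0

/-- A vector is a one-hot tier if it has exactly one index set to 1 and 0 elsewhere. -/
def IsOneHotTier {k : ℕ} (x : Fin k → ℝ) : Prop :=
  ∃! i : Fin k, x i = 1 ∧ ∀ j : Fin k, j ≠ i → x j = 0

/-- The abstract value a^X associated to a set X of one-hot tiers. -/
noncomputable def aX {k : ℕ} (X : Set (Fin k → ℝ)) : OH k :=
  fun i => (alphaCP ((fun x => x i) '' {x ∈ X | x i = 0}),
            alphaCP ((fun x => x i) '' {x ∈ X | x i = 1}))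

/-- Abstract counterpart on OH_k of a function f : ℝ → ℝ. -/
def fOH {k : ℕ} (f : ℝ → ℝ) (a : OH k) : OH k :=
  fun i => (fCP f (a i).1, fCP f (a i).2)

/-- An abstract value of OH_k is top-less when no ⊤ component occurs. -/
def TopLess {k : ℕ} (a : OH k) : Prop :=
  ∀ i : Fin k, (a i).1 ≠ CP.top ∧ (a i).2 ≠ CP.top

/-- The composition f₁ ∘ f₂ ∘ ⋯ ∘ f_p of a list of functions. -/
def compList (fs : List (ℝ → ℝ)) : ℝ → ℝ := fs.foldr (· ∘ ·) id

/-- The composition f₁^OH ∘ f₂^OH ∘ ⋯ ∘ f_p^OH of the abstract counterparts. -/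
def compListOH {k : ℕ} (fs : List (ℝ → ℝ)) : OH k → OH k :=
  fs.foldr (fun f g => fOH f ∘ g) id

lemma fCP_mem {f : ℝ → ℝ} {c : CP} {x : ℝ} (hx : x ∈ gammaCP c) :
    f x ∈ gammaCP (fCP f c) := by
  cases c <;> simp [gammaCP, fCP] at hx ⊢
  rw [hx]

lemma fCP_mem_rev {f : ℝ → ℝ} {c : CP} {y : ℝ} (hc : c ≠ CP.top)
    (hy : y ∈ gammaCP (fCP f c)) : ∃ w, c = CP.val w ∧ y = f w := by
  cases c with
  | bot => simp [gammaCP, fCP] at hy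
  | top => exact absurd rfl hc
  | val z => exact ⟨z, rfl, by simpa [gammaCP, fCP] using hy⟩

lemma topLess_fOH {k : ℕ} (f : ℝ → ℝ) (a : OH k) (ha : TopLess a) :
    TopLess (fOH f a) := by
  intro i
  constructor
  · have := (ha i).1
    cases h : (a i).1 <;> simp [fOH, fCP, h] at this ⊢
  · have := (ha i).2
    cases h : (a i).2 <;> simp [fOH, fCP, h] at this ⊢

lemma image_gammaHat {k : ℕ} (f : ℝ → ℝ) (i : Fin k) (a : OH k)
    (ha : TopLess a) :
    (fun x : Fin k → ℝ => f ∘ x) '' gammaHat i a = gammaHat i (fOH f a) := by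
  ext y
  constructor
  · rintro ⟨x, ⟨hxi, hxj⟩, rfl⟩
    exact ⟨fCP_mem hxi, fun j hj => fCP_mem (hxj j hj)⟩
  · rintro ⟨hyi, hyj⟩
    have h : ∀ j : Fin k, ∃ w : ℝ,
        (if j = i then (a j).2 else (a j).1) = CP.val w ∧ y j = f w := by
      intro j
      by_cases hji : j = i
      · subst hji
        simpa using fCP_mem_rev (ha j).2 hyi
      · simpa [hji] using fCP_mem_rev (ha j).1 (hyj j hji)
    choose x hx hyx using h
    refine ⟨x, ⟨?_, fun j hj => ?_⟩, ?_⟩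
    · have := hx i
      rw [if_pos rfl] at this
      simp [this, gammaCP]
    · have := hx j
      rw [if_neg hj] at this
      simp [this, gammaCP]
    · funext j
      exact (hyx j).symm

lemma image_gammaOH {k : ℕ} (f : ℝ → ℝ) (a : OH k) (ha : TopLess a) :
    (fun x : Fin k → ℝ => f ∘ x) '' gammaOH a = gammaOH (fOH f a) := by
  simp only [gammaOH, Set.image_iUnion]
  exact Set.iUnion_congr fun i => image_gammaHat f i a ha

lemma topLess_compListOH {k : ℕ} (fs : List (ℝ → ℝ)) (a : OH k)
    (ha : TopLess a) : TopLess (compListOH fs a) := by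
  induction fs with
  | nil => exact ha
  | cons f fs ih => exact topLess_fOH f _ ih

/-- Theorem: for functions f₁, …, f_p : ℝ → ℝ and a top-less a ∈ OH_k, the
    composition f₁^OH ∘ ⋯ ∘ f_p^OH is a complete abstraction of f₁ ∘ ⋯ ∘ f_p
    on a: (f₁ ∘ ⋯ ∘ f_p)(γ^{OH_k}(a)) = γ^{OH_k}((f₁^OH ∘ ⋯ ∘ f_p^OH)(a)). -/
theorem compList_fOH_complete {k : ℕ} (fs : List (ℝ → ℝ)) (a : OH k)
    (ha : TopLess a) :
    (fun x : Fin k → ℝ => compList fs ∘ x) '' gammaOH a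
      = gammaOH (compListOH fs a) := by
  induction fs with
  | nil =>
    simp only [compList, compListOH, List.foldr]
    have : (fun x : Fin k → ℝ => id ∘ x) = id := rfl
    rw [this, Set.image_id]
    rfl
  | cons f fs ih =>
    have h1 : compList (f :: fs) = f ∘ compList fs := rfl
    have h2 : compListOH (k := k) (f :: fs) = fOH f ∘ compListOH fs := rfl
    rw [h1, h2]
    have h3 : (fun x : Fin k → ℝ => (f ∘ compList fs) ∘ x)
        = (fun x : Fin k → ℝ => f ∘ x) ∘ (fun x => compList fs ∘ x) := rfl
    rw [h3, Set.image_comp, ih, Function.comp_apply]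
    exact image_gammaOH f _ (topLess_compListOH fs a ha)
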